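/- Let C, V be finite sets, P a stochastic matrix on C×V with invariant distribution p̂ (P p̂ = p̂) whose marginal p̄(v) = ∑_{c∈C} p̂(c,v) is strictly positive for every v ∈ V, and let P_V be the induced chain on V. Let X ⊆ V satisfy 0 < p̂(C×X) ≤ 1/2, and let p̂_{C×X} denote the distribution p̂ conditioned on C×X (i.e. p̂_{C×X}(c,v) = p̂(c,v)/p̂(C×X) for v ∈ X and 0 otherwise). Then for every t ≥ 0, ‖f(P^t p̂_{C×X}) − p̄‖_TV ≥ 1/2 − t·Φ_X(P_V), where f is the marginal map f(p)(v) = ∑_{c∈C} p(c,v). -/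

import Mathlib

open Finset

section Defs

variable {S : Type*} [Fintype S]

/-- `p` is a probability distribution on the finite set `S`. -/
def IsProbDist (p : S → ℝ) : Prop := (∀ s, 0 ≤ p s) ∧ ∑ s, p s = 1

/-- The mass `p(X) = ∑_{s ∈ X} p s` of a subset `X`. -/
noncomputable def mass (p : S → ℝ) (X : Set S) : ℝ := ∑ s, X.indicator p s

/-- Total variation distance `‖p - q‖_TV = (1/2) ∑_s |p s - q s|`. -/
noncomputable def tvDist (p q : S → ℝ) : ℝ := (1/2) * ∑ s, |p s - q s|

/-- A (column-)stochastic matrix `P s' s`: entries nonnegative, columns sum to one. -/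
def IsStochastic (P : S → S → ℝ) : Prop :=
  (∀ s' s, 0 ≤ P s' s) ∧ ∀ s, ∑ s', P s' s = 1

/-- Action of a matrix on a distribution: `(P p)(s') = ∑_s P s' s * p s`. -/
def matVec (P : S → S → ℝ) (p : S → ℝ) : S → ℝ := fun s' => ∑ s, P s' s * p s

open scoped Classical in
/-- Ergodic flow `Q_P(Xᶜ, X) = ∑_{s ∈ X, s' ∉ X} P s' s * pbar s`. -/
noncomputable def ergFlow (P : S → S → ℝ) (pbar : S → ℝ) (X : Set S) : ℝ :=
  ∑ s, ∑ s', if s ∈ X ∧ s' ∉ X then P s' s * pbar s else 0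

/-- Bottleneck ratio `Φ_X(P) = Q_P(Xᶜ,X) / pbar(X)`. -/
noncomputable def bottleneck (P : S → S → ℝ) (pbar : S → ℝ) (X : Set S) : ℝ :=
  ergFlow P pbar X / mass pbar X

/-- The distribution `pbar` conditioned on the set `X`. -/
noncomputable def condDist (pbar : S → ℝ) (X : Set S) : S → ℝ :=
  X.indicator (fun s => pbar s / mass pbar X)

/-- Conductance `Φ(P) = min { Φ_X(P) : 0 < pbar(X) ≤ 1/2 }`. -/
noncomputable def conductance (P : S → S → ℝ) (pbar : S → ℝ) : ℝ :=
  sInf {r | ∃ X : Set S, 0 < mass pbar X ∧ mass pbar X ≤ 1/2 ∧ r = bottleneck P pbar X}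

end Defs

section Graph

variable {V : Type*} [Fintype V]

/-- Neighborhood `B(X) = {v ∉ X : (v,v') ∈ E for some v' ∈ X}`. -/
def nbhd (E : V → V → Prop) (X : Set V) : Set V :=
  {v | v ∉ X ∧ ∃ v' ∈ X, E v v'}

/-- A matrix on `V` is local w.r.t. the graph: `P v' v = 0` whenever `(v,v') ∉ E`. -/
def IsLocalMatrix (E : V → V → Prop) (P : V → V → ℝ) : Prop :=
  ∀ v' v, ¬ E v v' → P v' v = 0

/-- Graph conductance `Φ_pbar`: supremum of `Φ(P)` over local stochastic `P` fixing `pbar`. -/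
noncomputable def graphConductance (E : V → V → Prop) (pbar : V → ℝ) : ℝ :=
  sSup {r | ∃ P : V → V → ℝ, IsStochastic P ∧ IsLocalMatrix E P ∧
    matVec P pbar = pbar ∧ r = conductance P pbar}

/-- A family of stochastic linear maps is local w.r.t. the graph. -/
def IsLocalFamily (E : V → V → Prop) (Ψ : ℕ → (V → ℝ) →ₗ[ℝ] (V → ℝ)) : Prop :=
  ∀ (X : Set V) (p₀ : V → ℝ), IsProbDist p₀ → ∀ t : ℕ,
    mass (Ψ (t+1) p₀) X ≤ mass (Ψ t p₀) X + mass (Ψ t p₀) (nbhd E X)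

end Graph

section Lift

variable {C V : Type*} [Fintype C] [Fintype V]

/-- A stochastic matrix on the lifted space `C × V` is local in the lifted sense. -/
def IsLocalLift (E : V → V → Prop) (P : C × V → C × V → ℝ) : Prop :=
  ∀ c' v' c v, ¬ E v v' → P (c', v') (c, v) = 0

open scoped Classical in
/-- Initialization `F[p](c,v) = p v` if `c = ca v`, else `0`. -/
noncomputable def liftInit (ca : V → C) (p : V → ℝ) : C × V → ℝ :=
  fun x => if x.1 = ca x.2 then p x.2 else 0

/-- Marginal map `f(p̂)(v) = ∑_c p̂(c,v)`. -/
def margDist (phat : C × V → ℝ) : V → ℝ := fun v => ∑ c, phat (c, v)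

/-- Induced chain on `V` of a lifted chain `P` with stationary distribution `phat`. -/
noncomputable def inducedChain (P : C × V → C × V → ℝ) (phat : C × V → ℝ) : V → V → ℝ :=
  fun v' v => ∑ c, ∑ c', (phat (c, v) / margDist phat v) * P (c', v') (c, v)

end Lift

/-!
Started from `p̂` conditioned on `A = C × X`, the chain stays pointwise below `p̂ / p̂(A)`
(`p̂` is invariant and `P` is monotone), so in each step at most `Q_P(Aᶜ, A) / p̂(A) = Φ_A(P)`
of its mass leaves `A`; after `t` steps at least `1 - t Φ_A(P)` is left in `A`, whereas `p̂`
puts at most `1/2` there. Marginals preserve the mass of `C × X`, and `Φ_A(P) = Φ_X(P_V)`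
because `p̄(v) P_V(v', v) = ∑_{c,c'} P((c',v'),(c,v)) p̂(c,v)`.
-/

section Distributions

variable {S : Type*} [Fintype S]

lemma mass_sub_mass_le_tvDist {p q : S → ℝ} (h : ∑ s, p s = ∑ s, q s) (X : Set S) :
    mass p X - mass q X ≤ tvDist p q := by
  have hdiff : mass p X - mass q X = ∑ s, X.indicator (p - q) s := by
    rw [mass, mass, ← Finset.sum_sub_distrib, Set.indicator_sub']
    rfl
  have hzero : ∑ s, (p s - q s) = 0 := by rw [Finset.sum_sub_distrib, h, sub_self]
  -- `2·1_X(d) - d ≤ |d|` pointwise, and `d = p - q` has total sum zero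
  have hpoint : ∀ s, 2 * X.indicator (p - q) s - (p s - q s) ≤ |p s - q s| := by
    intro s
    by_cases hs : s ∈ X
    · simp only [Set.indicator_of_mem hs, Pi.sub_apply]
      linarith [le_abs_self (p s - q s)]
    · simp only [Set.indicator_of_notMem hs]
      linarith [neg_le_abs (p s - q s)]
  have hsum := Finset.sum_le_sum fun s (_ : s ∈ Finset.univ) => hpoint s
  rw [Finset.sum_sub_distrib, hzero, ← Finset.mul_sum] at hsum
  rw [hdiff, tvDist]
  linarith

section Chain

variable {P : S → S → ℝ}

lemma sum_matVec (hP : IsStochastic P) (r : S → ℝ) : ∑ s, matVec P r s = ∑ s, r s := by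
  simp only [matVec]
  rw [Finset.sum_comm]
  simp [← Finset.sum_mul, hP.2]

lemma sum_iterate_matVec (hP : IsStochastic P) (r : S → ℝ) (n : ℕ) :
    ∑ s, (matVec P)^[n] r s = ∑ s, r s := by
  induction n with
  | zero => rfl
  | succ n ih => rw [Function.iterate_succ_apply', sum_matVec hP, ih]

lemma matVec_nonneg (hP : IsStochastic P) {r : S → ℝ} (hr : 0 ≤ r) : 0 ≤ matVec P r :=
  fun s' => Finset.sum_nonneg fun s _ => mul_nonneg (hP.1 s' s) (hr s)

lemma matVec_mono (hP : IsStochastic P) {r r' : S → ℝ} (h : r ≤ r') :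
    matVec P r ≤ matVec P r' :=
  fun s' => Finset.sum_le_sum fun s _ => mul_le_mul_of_nonneg_left (h s) (hP.1 s' s)

lemma matVec_smul (c : ℝ) (r : S → ℝ) : matVec P (c • r) = c • matVec P r := by
  ext s'
  simp only [matVec, Pi.smul_apply, smul_eq_mul, Finset.mul_sum]
  exact Finset.sum_congr rfl fun s _ => by ring

lemma ergFlow_mono (hP : IsStochastic P) {r r' : S → ℝ} (h : r ≤ r') (X : Set S) :
    ergFlow P r X ≤ ergFlow P r' X := by
  unfold ergFlow
  gcongr with s _ s' _
  split_ifs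
  · exact mul_le_mul_of_nonneg_left (h s) (hP.1 s' s)
  · rfl

lemma ergFlow_smul (c : ℝ) (r : S → ℝ) (X : Set S) :
    ergFlow P (c • r) X = c * ergFlow P r X := by
  unfold ergFlow
  simp only [Finset.mul_sum, Pi.smul_apply, smul_eq_mul, mul_ite, mul_zero]
  exact Finset.sum_congr rfl fun s _ => Finset.sum_congr rfl fun s' _ => by
    split_ifs <;> ring

lemma mass_sub_ergFlow_le_mass_matVec (hP : IsStochastic P) {r : S → ℝ} (hr : 0 ≤ r)
    (X : Set S) : mass r X - ergFlow P r X ≤ mass (matVec P r) X := by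
  classical
  have hcol : ∀ s, ∑ s', P s' s * r s = r s := fun s => by rw [← Finset.sum_mul, hP.2, one_mul]
  have hmass : mass (matVec P r) X = ∑ s, ∑ s', X.indicator (fun s' => P s' s * r s) s' := by
    simp only [mass, matVec, Set.indicator_apply]
    rw [Finset.sum_comm]
    exact Finset.sum_congr rfl fun s' _ => by split_ifs <;> simp
  rw [hmass, mass, ergFlow, ← Finset.sum_sub_distrib]
  refine Finset.sum_le_sum fun s _ => ?_
  by_cases hs : s ∈ X
  · have hsplit : ∀ s', X.indicator (fun s' => P s' s * r s) s'
        + (if s ∈ X ∧ s' ∉ X then P s' s * r s else 0) = P s' s * r s := fun s' => by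
      by_cases hs' : s' ∈ X <;> simp [hs, hs']
    have hsum := Finset.sum_congr rfl fun s' (_ : s' ∈ Finset.univ) => hsplit s'
    rw [Finset.sum_add_distrib, hcol] at hsum
    rw [Set.indicator_of_mem hs]
    linarith
  · simp only [Set.indicator_of_notMem hs, hs, false_and, if_false, Finset.sum_const_zero,
      sub_zero]
    exact Finset.sum_nonneg fun s' _ =>
      Set.indicator_nonneg (fun s' _ => mul_nonneg (hP.1 s' s) (hr s)) s'

section Conditioning

variable {pbar : S → ℝ} {A : Set S}

lemma condDist_nonneg (hp : 0 ≤ pbar) (hA : 0 < mass pbar A) : 0 ≤ condDist pbar A :=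
  Set.indicator_nonneg fun s _ => div_nonneg (hp s) hA.le

lemma condDist_le_smul (hp : 0 ≤ pbar) (hA : 0 < mass pbar A) :
    condDist pbar A ≤ (mass pbar A)⁻¹ • pbar := fun s => by
  rw [Pi.smul_apply, smul_eq_mul, inv_mul_eq_div]
  exact Set.indicator_le_self' (fun s _ => div_nonneg (hp s) hA.le) s

lemma sum_condDist (hA : mass pbar A ≠ 0) : ∑ s, condDist pbar A s = 1 := by
  have h : ∀ s, condDist pbar A s = (mass pbar A)⁻¹ * A.indicator pbar s := fun s => by
    by_cases hs : s ∈ A <;> simp [condDist, hs, div_eq_inv_mul]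
  simp only [h, ← Finset.mul_sum]
  exact inv_mul_cancel₀ hA

lemma mass_condDist (hA : mass pbar A ≠ 0) : mass (condDist pbar A) A = 1 := by
  rw [mass, condDist, Set.indicator_indicator, Set.inter_self]
  exact sum_condDist hA

end Conditioning

theorem one_sub_mul_bottleneck_le_mass_iterate_condDist (hP : IsStochastic P) {pbar : S → ℝ}
    (hp : 0 ≤ pbar) (hinv : matVec P pbar = pbar) {A : Set S} (hA : 0 < mass pbar A) (t : ℕ) :
    1 - t * bottleneck P pbar A ≤ mass ((matVec P)^[t] (condDist pbar A)) A := by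
  set q : ℕ → S → ℝ := fun n => (matVec P)^[n] (condDist pbar A)
  have hq : ∀ n, q (n + 1) = matVec P (q n) := fun n => Function.iterate_succ_apply' _ _ _
  have hbound : ∀ n, 0 ≤ q n ∧ q n ≤ (mass pbar A)⁻¹ • pbar := by
    intro n
    induction n with
    | zero => exact ⟨condDist_nonneg hp hA, condDist_le_smul hp hA⟩
    | succ n ih =>
      rw [hq]
      exact ⟨matVec_nonneg hP ih.1, (matVec_mono hP ih.2).trans_eq (by rw [matVec_smul, hinv])⟩
  induction t with
  | zero => simp [mass_condDist hA.ne']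
  | succ n ih =>
    have hstep := mass_sub_ergFlow_le_mass_matVec hP (hbound n).1 A
    have hleak : ergFlow P (q n) A ≤ bottleneck P pbar A :=
      calc ergFlow P (q n) A ≤ ergFlow P ((mass pbar A)⁻¹ • pbar) A :=
            ergFlow_mono hP (hbound n).2 A
        _ = bottleneck P pbar A := by rw [ergFlow_smul, bottleneck, inv_mul_eq_div]
    rw [← hq] at hstep
    push_cast
    linarith

end Chain

end Distributions

section Marginal

variable {C V : Type*} [Fintype C]

lemma sum_margDist [Fintype V] (r : C × V → ℝ) : ∑ v, margDist r v = ∑ x, r x :=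
  (Fintype.sum_prod_type_right r).symm

lemma mass_margDist [Fintype V] (r : C × V → ℝ) (X : Set V) :
    mass (margDist r) X = mass r {x | x.2 ∈ X} := by
  rw [mass, mass, Fintype.sum_prod_type_right]
  refine Finset.sum_congr rfl fun v _ => ?_
  by_cases hv : v ∈ X <;> simp [hv, margDist]

lemma inducedChain_mul_margDist (P : C × V → C × V → ℝ) {phat : C × V → ℝ} (hp : 0 ≤ phat)
    (v' v : V) :
    inducedChain P phat v' v * margDist phat v = ∑ c, ∑ c', P (c', v') (c, v) * phat (c, v) := by
  by_cases hv : margDist phat v = 0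
  · have hzero : ∀ c, phat (c, v) = 0 := fun c =>
      (Finset.sum_eq_zero_iff_of_nonneg fun c _ => hp (c, v)).1 hv c (Finset.mem_univ c)
    simp [hv, hzero]
  · simp only [inducedChain, Finset.sum_mul]
    refine Finset.sum_congr rfl fun c _ => Finset.sum_congr rfl fun c' _ => ?_
    field_simp

lemma ergFlow_inducedChain [Fintype V] (P : C × V → C × V → ℝ) {phat : C × V → ℝ}
    (hp : 0 ≤ phat) (X : Set V) :
    ergFlow (inducedChain P phat) (margDist phat) X = ergFlow P phat {x | x.2 ∈ X} := by
  rw [ergFlow, ergFlow, Fintype.sum_prod_type_right]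
  refine Finset.sum_congr rfl fun v _ => ?_
  simp only [Fintype.sum_prod_type_right]
  rw [Finset.sum_comm]
  refine Finset.sum_congr rfl fun v' _ => ?_
  by_cases h : v ∈ X ∧ v' ∉ X
  · simp [h, inducedChain_mul_margDist P hp]
  · simp [h]

lemma bottleneck_inducedChain [Fintype V] (P : C × V → C × V → ℝ) {phat : C × V → ℝ}
    (hp : 0 ≤ phat) (X : Set V) :
    bottleneck (inducedChain P phat) (margDist phat) X = bottleneck P phat {x | x.2 ∈ X} := by
  rw [bottleneck, bottleneck, ergFlow_inducedChain P hp, mass_margDist]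

end Marginal

theorem marginal_tvDist_lower_bound_general
    {C V : Type} [Fintype C] [Fintype V]
    (P : C × V → C × V → ℝ) (hP : IsStochastic P)
    (phat : C × V → ℝ) (hphat : IsProbDist phat) (hinv : matVec P phat = phat)
    (X : Set V)
    (hX1 : 0 < mass phat {x : C × V | x.2 ∈ X})
    (hX2 : mass phat {x : C × V | x.2 ∈ X} ≤ 1/2)
    (t : ℕ) :
    1/2 - (t : ℝ) * bottleneck (inducedChain P phat) (margDist phat) X
      ≤ tvDist (margDist ((matVec P)^[t] (condDist phat {x : C × V | x.2 ∈ X})))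
          (margDist phat) := by
  set A : Set (C × V) := {x | x.2 ∈ X}
  set q := (matVec P)^[t] (condDist phat A)
  have hmass := one_sub_mul_bottleneck_le_mass_iterate_condDist hP hphat.1 hinv hX1 t
  have htotal : ∑ v, margDist q v = ∑ v, margDist phat v := by
    rw [sum_margDist, sum_margDist, sum_iterate_matVec hP, sum_condDist hX1.ne', hphat.2]
  calc 1/2 - (t : ℝ) * bottleneck (inducedChain P phat) (margDist phat) X
      ≤ mass q A - mass phat A := by rw [bottleneck_inducedChain P hphat.1]; linarith
    _ = mass (margDist q) X - mass (margDist phat) X := by rw [mass_margDist, mass_margDist]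
    _ ≤ tvDist (margDist q) (margDist phat) := mass_sub_mass_le_tvDist htotal X

/-- starting from `p̂` conditioned on `C × X` (with `0 < p̂(C×X) ≤ 1/2`),
the marginal of `P^t p̂_{C×X}` stays at total variation distance at least
`1/2 − t·Φ_X(P_V)` from the stationary marginal `p̄`. -/
theorem marginal_tvDist_lower_bound
    {C V : Type} [Fintype C] [Fintype V]
    (P : C × V → C × V → ℝ) (hP : IsStochastic P)
    (phat : C × V → ℝ) (hphat : IsProbDist phat) (hinv : matVec P phat = phat)
    (hpos : ∀ v : V, 0 < margDist phat v)
    (X : Set V)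
    (hX1 : 0 < mass phat {x : C × V | x.2 ∈ X})
    (hX2 : mass phat {x : C × V | x.2 ∈ X} ≤ 1/2)
    (t : ℕ) :
    1/2 - (t : ℝ) * bottleneck (inducedChain P phat) (margDist phat) X
      ≤ tvDist (margDist ((matVec P)^[t] (condDist phat {x : C × V | x.2 ∈ X})))
          (margDist phat) :=
  marginal_tvDist_lower_bound_general P hP phat hphat hinv X hX1 hX2 t
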